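/- arXiv:1609.03101 — 2 statements merged into one kernel-verified Lean document; each statement's English description precedes it below -/
import Mathlib

section
/- For every even integer n ≥ 6 the following holds. Let A and B be disjoint sets with |A ∪ B| = n, where |A| = n/2 − 1 if 8 divides n and |A| = n/2 otherwise, and let H* be the 4-graph with vertex set A ∪ B whose edges are exactly the 4-element subsets e of A ∪ B with |e ∩ A| odd. Then δ(H*) = n/2 − 3 if 8 divides n and δ(H*) = n/2 − 2 otherwise, and H* contains no Hamilton 2-cycle. -/
open Finset

namespace HamiltonTwoCycles

/-- The number of edges of `E` containing the vertex set `S` (degree/codegree of `S`). -/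
def deg {n : ℕ} (E : Finset (Finset (Fin n))) (S : Finset (Fin n)) : ℕ :=
  (E.filter fun e => S ⊆ e).card

/-- `E` is the edge set of a 4-uniform hypergraph on the vertex set `Fin n`. -/
def Is4Graph {n : ℕ} (E : Finset (Finset (Fin n))) : Prop :=
  ∀ e ∈ E, e.card = 4

/-- The minimum codegree of the 4-graph `E` is at least the real number `x`. -/
def MinCodegGE {n : ℕ} (E : Finset (Finset (Fin n))) (x : ℝ) : Prop :=
  ∀ S : Finset (Fin n), S.card = 3 → x ≤ (deg E S : ℝ)

/-- The 4-graph `E` on `Fin n` contains a Hamilton 2-cycle: a cyclic ordering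
`f 0, f 1, …, f (n-1)` of all vertices such that each of the `n/2` quadruples of four
cyclically consecutive vertices starting at an even position forms an edge. -/
def HamCycle2 (n : ℕ) (E : Finset (Finset (Fin n))) : Prop :=
  Even n ∧ ∃ f : ZMod n → Fin n, Function.Bijective f ∧
    ∀ j : ℕ, j < n / 2 →
      ({f (2*j), f (2*j+1), f (2*j+2), f (2*j+3)} : Finset (Fin n)) ∈ E

/-- `f 0, f 1, …, f (2ℓ+1)` is a 2-path of length `ℓ` in the 4-graph `E`:
the vertices are distinct and each of the `ℓ` quadruples of consecutive vertices
starting at an even position forms an edge. -/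
def IsPath2 (n : ℕ) (E : Finset (Finset (Fin n))) (ℓ : ℕ) (f : ℕ → Fin n) : Prop :=
  Set.InjOn f (Set.Iio (2*ℓ+2)) ∧
  ∀ j : ℕ, j < ℓ →
    ({f (2*j), f (2*j+1), f (2*j+2), f (2*j+3)} : Finset (Fin n)) ∈ E

/-- The vertex set of the 2-path of length `ℓ` described by `f`. -/
def pathVerts (n ℓ : ℕ) (f : ℕ → Fin n) : Finset (Fin n) :=
  (Finset.range (2*ℓ+2)).image f

/-- The unordered pair of ends `{e₁, e₂}` equals the unordered pair `{q₁, q₂}`. -/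
def EndsMatch {n : ℕ} (e₁ e₂ q₁ q₂ : Finset (Fin n)) : Prop :=
  (e₁ = q₁ ∧ e₂ = q₂) ∨ (e₁ = q₂ ∧ e₂ = q₁)

/-- The 4-graph `E` contains a Hamilton 2-path whose ends are `p₁` and `p₂`. -/
def HamPath2Ends (n : ℕ) (E : Finset (Finset (Fin n))) (p₁ p₂ : Finset (Fin n)) : Prop :=
  ∃ (ℓ : ℕ) (f : ℕ → Fin n), IsPath2 n E ℓ f ∧ pathVerts n ℓ f = Finset.univ ∧
    EndsMatch {f 0, f 1} {f (2*ℓ), f (2*ℓ+1)} p₁ p₂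

/-- The total 2-pathlength of the 4-graph `E` is at least `t`: there are vertex-disjoint
2-paths in `E` whose lengths sum to at least `t`. -/
def TotalPathlengthGE (n : ℕ) (E : Finset (Finset (Fin n))) (t : ℕ) : Prop :=
  ∃ (k : ℕ) (ℓ : ℕ → ℕ) (f : ℕ → ℕ → Fin n),
    (∀ i < k, IsPath2 n E (ℓ i) (f i)) ∧
    (∀ i < k, ∀ j < k, i ≠ j →
      Disjoint (pathVerts n (ℓ i) (f i)) (pathVerts n (ℓ j) (f j))) ∧
    t ≤ ∑ i ∈ Finset.range k, ℓ i

/-- The odd edges of `E` with respect to the bipartition `{A, Aᶜ}`. -/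
def oddEdges {n : ℕ} (E : Finset (Finset (Fin n))) (A : Finset (Fin n)) :
    Finset (Finset (Fin n)) :=
  E.filter fun e => Odd (e ∩ A).card

/-- The even edges of `E` with respect to the bipartition `{A, Aᶜ}`. -/
def evenEdges {n : ℕ} (E : Finset (Finset (Fin n))) (A : Finset (Fin n)) :
    Finset (Finset (Fin n)) :=
  E.filter fun e => Even (e ∩ A).card

/-- `p` is a split pair with respect to the bipartition `{A, Aᶜ}`. -/
def SplitPair {n : ℕ} (A p : Finset (Fin n)) : Prop :=
  p.card = 2 ∧ (p ∩ A).card = 1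

/-- `p` is a connate pair with respect to the bipartition `{A, Aᶜ}`. -/
def ConnatePair {n : ℕ} (A p : Finset (Fin n)) : Prop :=
  p.card = 2 ∧ (p ∩ A).card ≠ 1

/-- The bipartition `{A, Aᶜ}` of the vertex set of the 4-graph `E` is even-good. -/
def EvenGood (n : ℕ) (E : Finset (Finset (Fin n))) (A : Finset (Fin n)) : Prop :=
  (Even A.card ∨ A.card = Aᶜ.card) ∨
  (∃ e ∈ oddEdges E A, ∃ e' ∈ oddEdges E A,
      e ∩ e' = ∅ ∨ SplitPair A (e ∩ e')) ∨
  (A.card = Aᶜ.card + 2 ∧ ∃ e ∈ oddEdges E A, ∃ e' ∈ oddEdges E A,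
      (e ∩ e').card = 2 ∧ e ∩ e' ⊆ A) ∨
  (Aᶜ.card = A.card + 2 ∧ ∃ e ∈ oddEdges E A, ∃ e' ∈ oddEdges E A,
      (e ∩ e').card = 2 ∧ e ∩ e' ⊆ Aᶜ)

/-- The bipartition `{A, Aᶜ}` of the vertex set of the 4-graph `E` is odd-good. -/
def OddGood (n : ℕ) (E : Finset (Finset (Fin n))) (A : Finset (Fin n)) : Prop :=
  ∃ m d : ℕ, (m = 0 ∨ m = 2 ∨ m = 4 ∨ m = 6) ∧ (d = 0 ∨ d = 2) ∧
    m % 8 = n % 8 ∧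
    (d : ℤ) % 4 = ((A.card : ℤ) - (Aᶜ.card : ℤ)) % 4 ∧
    (((m = 0 ∧ d = 0) ∨ (m = 4 ∧ d = 2)) ∨
     (((m = 2 ∧ d = 2) ∨ (m = 6 ∧ d = 0)) ∧ (evenEdges E A).Nonempty) ∨
     (((m = 4 ∧ d = 0) ∨ (m = 0 ∧ d = 2)) ∧ TotalPathlengthGE n (evenEdges E A) 2) ∨
     (((m = 6 ∧ d = 2) ∨ (m = 2 ∧ d = 0)) ∧
       ((∃ e ∈ evenEdges E A, (e ∩ A).card = 2 ∧ (e ∩ Aᶜ).card = 2) ∨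
        TotalPathlengthGE n (evenEdges E A) 3)))

/-- The bipartition `{A, Aᶜ}` is `c`-even-extremal. -/
def EvenExtremalBip (n : ℕ) (E : Finset (Finset (Fin n))) (c : ℝ)
    (A : Finset (Fin n)) : Prop :=
  (n : ℝ)/2 - c*n ≤ (A.card : ℝ) ∧ (A.card : ℝ) ≤ (n : ℝ)/2 + c*n ∧
  ((oddEdges E A).card : ℝ) ≤ c * (n.choose 4 : ℝ)

/-- The 4-graph `E` is `c`-even-extremal. -/
def EvenExtremal (n : ℕ) (E : Finset (Finset (Fin n))) (c : ℝ) : Prop :=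
  ∃ A : Finset (Fin n), EvenExtremalBip n E c A

/-- The bipartition `{A, Aᶜ}` is `c`-odd-extremal. -/
def OddExtremalBip (n : ℕ) (E : Finset (Finset (Fin n))) (c : ℝ)
    (A : Finset (Fin n)) : Prop :=
  (n : ℝ)/2 - c*n ≤ (A.card : ℝ) ∧ (A.card : ℝ) ≤ (n : ℝ)/2 + c*n ∧
  ((evenEdges E A).card : ℝ) ≤ c * (n.choose 4 : ℝ)

/-- The 4-graph `E` is `c`-odd-extremal. -/
def OddExtremal (n : ℕ) (E : Finset (Finset (Fin n))) (c : ℝ) : Prop :=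
  ∃ A : Finset (Fin n), OddExtremalBip n E c A

/-- The number of (vertex-sequence) 2-paths of length `ℓ` in `E` whose ends are the
pairs `p₁` and `p₂`. -/
noncomputable def pathCount (n : ℕ) (E : Finset (Finset (Fin n))) (ℓ : ℕ)
    (p₁ p₂ : Finset (Fin n)) : ℕ :=
  Nat.card {f : Fin (2*ℓ+2) → Fin n //
    IsPath2 n E ℓ (fun i => f ⟨i % (2*ℓ+2), Nat.mod_lt i (by omega)⟩) ∧
    EndsMatch {f ⟨0, by omega⟩, f ⟨1, by omega⟩}
      {f ⟨2*ℓ, by omega⟩, f ⟨2*ℓ+1, by omega⟩} p₁ p₂}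

/-- The 4-graph `E` on `n` vertices is `κ`-connecting. -/
def Connecting (n : ℕ) (E : Finset (Finset (Fin n))) (κ : ℝ) : Prop :=
  ∀ p₁ p₂ : Finset (Fin n), p₁.card = 2 → p₂.card = 2 → Disjoint p₁ p₂ →
    κ * (n : ℝ)^2 ≤ (pathCount n E 2 p₁ p₂ : ℝ) ∨
    κ * (n : ℝ)^4 ≤ (pathCount n E 3 p₁ p₂ : ℝ)

/-- The ordered octuple `O` is an absorbing structure for the pair `p` in the 4-graph `E`. -/
def AbsorbStruct (n : ℕ) (E : Finset (Finset (Fin n))) (p : Finset (Fin n))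
    (O : Fin 8 → Fin n) : Prop :=
  Function.Injective O ∧
  (∃ f : ℕ → Fin n, IsPath2 n E 3 f ∧
      pathVerts n 3 f = Finset.univ.image O ∧
      EndsMatch {f 0, f 1} {f 6, f 7} {O 0, O 1} {O 6, O 7}) ∧
  (∃ f : ℕ → Fin n, IsPath2 n E 4 f ∧
      pathVerts n 4 f = Finset.univ.image O ∪ p ∧
      EndsMatch {f 0, f 1} {f 8, f 9} {O 0, O 1} {O 6, O 7})

/-- The pair `p` is `β`-absorbable in the 4-graph `E`. -/
def Absorbable (n : ℕ) (E : Finset (Finset (Fin n))) (β : ℝ) (p : Finset (Fin n)) : Prop :=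
  β * (n : ℝ)^8 ≤ (Nat.card {O : Fin 8 → Fin n // AbsorbStruct n E p O} : ℝ)

/-- The 4-graph `E` is `(α,β)`-absorbing. -/
def Absorbing (n : ℕ) (E : Finset (Finset (Fin n))) (α β : ℝ) : Prop :=
  (Nat.card {p : Finset (Fin n) // p.card = 2 ∧ ¬ Absorbable n E β p} : ℝ) ≤ α * (n : ℝ)^2

/-- `g 0, …, g (m-1)` is a 2-cycle on `m` vertices in the 4-graph `E`. -/
def IsCycle2 (n : ℕ) (E : Finset (Finset (Fin n))) (m : ℕ) (g : ℕ → Fin n) : Prop :=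
  4 ≤ m ∧ Even m ∧ Set.InjOn g (Set.Iio m) ∧
  ∀ j : ℕ, j < m / 2 →
    ({g ((2*j) % m), g ((2*j+1) % m), g ((2*j+2) % m), g ((2*j+3) % m)} :
      Finset (Fin n)) ∈ E

/-- The vertex set of the 2-cycle on `m` vertices described by `g`. -/
def cycVerts (n m : ℕ) (g : ℕ → Fin n) : Finset (Fin n) :=
  (Finset.range m).image g

/-- The 2-path `f` (of length `ℓ`) is a segment of the 2-cycle `g` (on `m` vertices). -/
def IsSegment (n m : ℕ) (g : ℕ → Fin n) (ℓ : ℕ) (f : ℕ → Fin n) : Prop :=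
  2*ℓ+2 ≤ m ∧ ∃ t : ℕ, Even t ∧ ∀ i < 2*ℓ+2, f i = g ((t + i) % m)

/-- The 2-graph `G` contains a perfect matching on the vertex set `S`. -/
def PerfectMatchingOn (n : ℕ) (G : Finset (Finset (Fin n))) (S : Finset (Fin n)) : Prop :=
  ∃ M ⊆ G, (∀ p ∈ M, ∀ q ∈ M, p ≠ q → Disjoint p q) ∧ M.biUnion id = S

/-- `v` is a `β`-fine vertex of the 4-graph `E` on `n` vertices. -/
def FineVertex (n : ℕ) (E : Finset (Finset (Fin n))) (β : ℝ) (v : Fin n) : Prop :=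
  (1 - β^3) * (n.choose 3 : ℝ) ≤ (deg E {v} : ℝ)

/-- `p` is a `β`-fine pair of the 4-graph `E` on `n` vertices. -/
def FinePair (n : ℕ) (E : Finset (Finset (Fin n))) (β : ℝ) (p : Finset (Fin n)) : Prop :=
  p.card = 2 ∧ (1 - β^2) * (n.choose 2 : ℝ) ≤ (deg E p : ℝ)

/-- `S` is a `β`-fine triple of the 4-graph `E` on `n` vertices. -/
def FineTriple (n : ℕ) (E : Finset (Finset (Fin n))) (β : ℝ) (S : Finset (Fin n)) : Prop :=
  S.card = 3 ∧ (1 - β) * (n : ℝ) ≤ (deg E S : ℝ)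

/-- `v` is a `γ`-good vertex with respect to the edge collection `F` (e.g. the even or
the odd edges of a 4-graph on `n` vertices). -/
def GoodVertexFor (n : ℕ) (F : Finset (Finset (Fin n))) (γ : ℝ) (v : Fin n) : Prop :=
  (1/2 - γ^5) * (n.choose 3 : ℝ) ≤ (deg F {v} : ℝ)

/-- `p` is a `γ`-good pair with respect to the edge collection `F`. -/
def GoodPairFor (n : ℕ) (F : Finset (Finset (Fin n))) (γ : ℝ) (p : Finset (Fin n)) : Prop :=
  p.card = 2 ∧ (1/2 - γ^3) * (n.choose 2 : ℝ) ≤ (deg F p : ℝ)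

/-- `S` is a `γ`-good triple with respect to the edge collection `F`. -/
def GoodTripleFor (n : ℕ) (F : Finset (Finset (Fin n))) (γ : ℝ) (S : Finset (Fin n)) : Prop :=
  S.card = 3 ∧ (1/2 - γ) * (n : ℝ) ≤ (deg F S : ℝ)

/-- `p` is a `β₂`-medium pair with respect to the edge collection `F`. -/
def MediumPairFor (n : ℕ) (F : Finset (Finset (Fin n))) (β₂ : ℝ) (p : Finset (Fin n)) : Prop :=
  p.card = 2 ∧ β₂ * (n.choose 2 : ℝ) ≤ (deg F p : ℝ)

/-- `v` is a `(β₁,β₂)`-medium vertex w.r.t. the even edges of `(E, A)`: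
it lies in at least `β₁ n` pairs that are `β₂`-medium (for the even edges). -/
def MediumVertexE (n : ℕ) (E : Finset (Finset (Fin n))) (A : Finset (Fin n))
    (β₁ β₂ : ℝ) (v : Fin n) : Prop :=
  β₁ * (n : ℝ) ≤
    (Nat.card {p : Finset (Fin n) // v ∈ p ∧ MediumPairFor n (evenEdges E A) β₂ p} : ℝ)

/-- `v` is a `(β₁,β₂)`-medium vertex w.r.t. the odd edges of `(E, A)`:
at least `β₁ n` vertices of `A` and at least `β₁ n` vertices of `Aᶜ` form a
`β₂`-medium pair with `v` (for the odd edges). -/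
def MediumVertexO (n : ℕ) (E : Finset (Finset (Fin n))) (A : Finset (Fin n))
    (β₁ β₂ : ℝ) (v : Fin n) : Prop :=
  β₁ * (n : ℝ) ≤
    (Nat.card {a : Fin n // a ∈ A ∧ MediumPairFor n (oddEdges E A) β₂ {v, a}} : ℝ) ∧
  β₁ * (n : ℝ) ≤
    (Nat.card {b : Fin n // b ∈ Aᶜ ∧ MediumPairFor n (oddEdges E A) β₂ {v, b}} : ℝ)



/-!
A triple `S` extends to an edge `insert v S` of `H*` exactly for the vertices `v ∉ S` lying in
`Aᶜ` when `|S ∩ A|` is odd and in `A` otherwise; hence every codegree is at least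
`min |A| |Aᶜ| - 2`, with equality for the triples meeting `A` in two vertices.

In a Hamilton 2-cycle, split the cyclic order into `n/2` consecutive pairs and let `c j` be the
number of vertices of `A` in the `j`-th pair. Each edge is the union of two consecutive pairs, so
`c j + c (j+1)` is odd: the parities of the `c j` alternate around the cycle, which forces
`n/2` to be even, and `|A|` is the sum of the `n/4` odd numbers `c (2i) + c (2i+1)`. Thus
`|A| ≡ n/4 (mod 2)`, whereas the prescribed `|A|` has the other parity.
-/

theorem card_inter_eq_of_card_eq_four {α : Type*} [DecidableEq α] {A : Finset α} {a b c d : α}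
    (h : #({a, b, c, d} : Finset α) = 4) :
    #({a, b, c, d} ∩ A) = (if a ∈ A then 1 else 0) + (if b ∈ A then 1 else 0) +
      (if c ∈ A then 1 else 0) + (if d ∈ A then 1 else 0) := by
  have ha : a ∉ ({b, c, d} : Finset α) := fun ha => by
    rw [insert_eq_of_mem ha] at h
    exact absurd h (by have := card_le_three (a := b) (b := c) (c := d); omega)
  rw [card_insert_of_notMem ha] at h
  have hb : b ∉ ({c, d} : Finset α) := fun hb => by
    rw [insert_eq_of_mem hb] at h
    exact absurd h (by have := card_le_two (a := c) (b := d); omega)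
  rw [card_insert_of_notMem hb] at h
  have hc : c ∉ ({d} : Finset α) := fun hc => by
    rw [insert_eq_of_mem hc] at h
    simp at h
  rw [← filter_mem_eq_inter, card_filter, sum_insert ha, sum_insert hb, sum_insert hc,
    sum_singleton, add_assoc, add_assoc]

theorem odd_card_insert_inter_iff {α : Type*} [DecidableEq α] [Fintype α] {A S : Finset α}
    {v : α} (hv : v ∉ S) :
    Odd #(insert v S ∩ A) ↔ v ∈ (if Odd #(S ∩ A) then Aᶜ else A) := by
  by_cases hvA : v ∈ A
  · rw [insert_inter_of_mem hvA, card_insert_of_notMem (fun h => hv (mem_inter.mp h).1),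
      Nat.odd_add_one]
    split_ifs <;> simp_all
  · rw [insert_inter_of_notMem hvA]
    split_ifs <;> simp_all

theorem exists_card_eq_three_card_inter_eq_two {α : Type*} [DecidableEq α] [Fintype α]
    {A : Finset α} (hA : 2 ≤ #A) (hAc : 1 ≤ #Aᶜ) :
    ∃ S : Finset α, #S = 3 ∧ #(S ∩ A) = 2 := by
  obtain ⟨P, hPA, hP⟩ := exists_subset_card_eq hA
  obtain ⟨Q, hQA, hQ⟩ := exists_subset_card_eq hAc
  rw [subset_compl_iff_disjoint_right] at hQA
  refine ⟨P ∪ Q, ?_, ?_⟩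
  · rw [card_union_of_disjoint (disjoint_of_subset_left hPA hQA.symm), hP, hQ]
  · rw [union_inter_distrib_right, inter_eq_left.mpr hPA, disjoint_iff_inter_eq_empty.mp hQA,
      union_empty, hP]

theorem sum_range_two_mul {M : Type*} [AddCommMonoid M] (g : ℕ → M) (t : ℕ) :
    ∑ i ∈ range (2 * t), g i = ∑ i ∈ range t, (g (2 * i) + g (2 * i + 1)) := by
  induction t with
  | zero => simp
  | succ t ih => rw [mul_add_one, sum_range_succ, sum_range_succ, ih, sum_range_succ, add_assoc]

theorem even_sum_range_iff_of_odd {x : ℕ → ℕ} {t : ℕ} (hodd : ∀ i < t, Odd (x i)) :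
    Even (∑ i ∈ range t, x i) ↔ Even t := by
  rw [even_sum_iff_even_card_odd, filter_true_of_mem fun i hi => hodd i (mem_range.mp hi),
    card_range]

theorem even_of_forall_odd_add_succ {c : ℕ → ℕ} {m : ℕ} (hper : c m = c 0)
    (hodd : ∀ j < m, Odd (c j + c (j + 1))) : Even m := by
  have hshift : ∑ j ∈ range m, c (j + 1) = ∑ j ∈ range m, c j := by
    have h₁ := sum_range_succ c m
    have h₂ := sum_range_succ' c m
    omega
  have hsum : Even (∑ j ∈ range m, (c j + c (j + 1))) := by
    rw [sum_add_distrib, hshift]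
    exact ⟨_, rfl⟩
  rwa [even_sum_range_iff_of_odd hodd] at hsum

theorem sum_range_natCast_eq_sum {M : Type*} [AddCommMonoid M] (n : ℕ) [NeZero n]
    (g : ZMod n → M) :
    ∑ i ∈ range n, g i = ∑ z, g z :=
  sum_nbij' (↑) ZMod.val (by simp) (fun z _ => mem_range.mpr (ZMod.val_lt z))
    (fun i hi => ZMod.val_cast_of_lt (mem_range.mp hi)) (fun z _ => ZMod.natCast_zmod_val z)
    (fun _ _ => rfl)

variable {n : ℕ}

theorem deg_filter_powersetCard_succ {k : ℕ} (P : Finset (Fin n) → Prop) [DecidablePred P]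
    {S : Finset (Fin n)} (hS : #S = k) :
    deg ((powersetCard (k + 1) univ).filter P) S = #{v ∈ Sᶜ | P (insert v S)} := by
  rw [deg, ← card_image_of_injOn ((insert_inj_on' S).mono (filter_subset _ _))]
  congr 1
  ext e
  simp only [mem_filter, mem_powersetCard, subset_univ, true_and, mem_image, mem_compl]
  constructor
  · rintro ⟨⟨he, hP⟩, hSe⟩
    obtain ⟨v, hv, rfl⟩ := exists_eq_insert_iff.mpr ⟨hSe, by rw [hS, he]⟩
    exact ⟨v, ⟨hv, hP⟩, rfl⟩
  · rintro ⟨v, ⟨hv, hP⟩, rfl⟩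
    exact ⟨⟨by rw [card_insert_of_notMem hv, hS], hP⟩, subset_insert v S⟩

theorem deg_oddEdges_powersetCard_four (A : Finset (Fin n)) {S : Finset (Fin n)} (hS : #S = 3) :
    deg (oddEdges (powersetCard 4 univ) A) S = #((if Odd #(S ∩ A) then Aᶜ else A) \ S) := by
  rw [oddEdges, deg_filter_powersetCard_succ _ hS]
  congr 1
  ext v
  by_cases hv : v ∈ S
  · simp [hv]
  · simp only [mem_filter, mem_compl, mem_sdiff, hv, not_false_eq_true, true_and, and_true]
    exact odd_card_insert_inter_iff hv

theorem min_card_sub_two_le_deg_oddEdges (A : Finset (Fin n)) {S : Finset (Fin n)} (hS : #S = 3) :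
    min #A #Aᶜ - 2 ≤ deg (oddEdges (powersetCard 4 univ) A) S := by
  have hsplit : #(S ∩ A) + #(S ∩ Aᶜ) = 3 := by
    rw [← hS, ← card_union_of_disjoint (disjoint_compl_right.mono inf_le_right inf_le_right),
      ← inter_union_distrib_left, union_compl, inter_univ]
  rw [deg_oddEdges_powersetCard_four A hS, card_sdiff]
  split_ifs with hodd <;> rw [Nat.odd_iff] at hodd <;> omega

theorem deg_oddEdges_eq_of_card_inter_eq_two (A : Finset (Fin n)) {S : Finset (Fin n)}
    (hS : #S = 3) (hSA : #(S ∩ A) = 2) :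
    deg (oddEdges (powersetCard 4 univ) A) S = #A - 2 := by
  rw [deg_oddEdges_powersetCard_four A hS, hSA, if_neg (by decide), card_sdiff, hSA]

theorem four_dvd_and_card_mod_two_of_hamCycle2 {A : Finset (Fin n)}
    (h : HamCycle2 n (oddEdges (powersetCard 4 univ) A)) : 4 ∣ n ∧ #A % 2 = n / 4 % 2 := by
  obtain ⟨hev, f, hf, hedge⟩ := h
  have : NeZero n := ⟨by rintro rfl; exact (f 0).elim0⟩
  let x : ℕ → ℕ := fun i => if f i ∈ A then 1 else 0
  have hx_per : ∀ i, x (n + i) = x i := by simp [x]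
  have hx_sum : ∑ i ∈ range n, x i = #A := by
    rw [sum_range_natCast_eq_sum n fun z => if f z ∈ A then 1 else 0,
      hf.sum_comp fun v => if v ∈ A then 1 else 0]
    simp
  have hquad : ∀ j < n / 2, Odd (x (2 * j) + x (2 * j + 1) + x (2 * j + 2) + x (2 * j + 3)) := by
    intro j hj
    have he := hedge j hj
    simp only [oddEdges, mem_filter, mem_powersetCard] at he
    obtain ⟨⟨-, hcard⟩, hodd⟩ := he
    rw [card_inter_eq_of_card_eq_four hcard] at hodd
    simpa [x] using hodd
  let c : ℕ → ℕ := fun j => x (2 * j) + x (2 * j + 1)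
  have hm : Even (n / 2) := by
    refine even_of_forall_odd_add_succ (c := c) ?_ fun j hj => ?_
    · simp only [c, Nat.two_mul_div_two_of_even hev]
      simpa using congrArg₂ (· + ·) (hx_per 0) (hx_per 1)
    · simpa [c, mul_add, add_assoc] using hquad j hj
  obtain ⟨t, ht⟩ := hm
  have hn2 := Nat.even_iff.mp hev
  have hA : Even #A ↔ Even t := by
    rw [← hx_sum, show n = 2 * (2 * t) by omega, sum_range_two_mul, sum_range_two_mul]
    refine even_sum_range_iff_of_odd fun i hi => ?_
    simpa [mul_add, add_assoc, ← mul_assoc] using hquad (2 * i) (by omega)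
  rw [Nat.even_iff, Nat.even_iff] at hA
  omega

end HamiltonTwoCycles

open HamiltonTwoCycles

theorem statement2_general (n : ℕ) (hn : 6 ≤ n) (A : Finset (Fin n))
    (hA : A.card = if 8 ∣ n then n / 2 - 1 else n / 2) :
    (∀ S : Finset (Fin n), S.card = 3 →
        (if 8 ∣ n then n / 2 - 3 else n / 2 - 2) ≤
          deg (oddEdges (Finset.powersetCard 4 (Finset.univ : Finset (Fin n))) A) S) ∧
    (∃ S : Finset (Fin n), S.card = 3 ∧
        deg (oddEdges (Finset.powersetCard 4 (Finset.univ : Finset (Fin n))) A) S =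
          (if 8 ∣ n then n / 2 - 3 else n / 2 - 2)) ∧
    ¬ HamCycle2 n (oddEdges (Finset.powersetCard 4 (Finset.univ : Finset (Fin n))) A) := by
  have hAc : #Aᶜ = n - #A := by rw [card_compl, Fintype.card_fin]
  have hmin : min #A #Aᶜ = #A := min_eq_left (by split_ifs at hA <;> omega)
  have hval : (if 8 ∣ n then n / 2 - 3 else n / 2 - 2) = #A - 2 := by
    split_ifs at hA ⊢ <;> omega
  rw [hval]
  refine ⟨fun S hS => hmin ▸ min_card_sub_two_le_deg_oddEdges A hS, ?_, fun h => ?_⟩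
  · obtain ⟨S, hS, hSA⟩ := exists_card_eq_three_card_inter_eq_two (A := A)
      (by split_ifs at hA <;> omega) (by split_ifs at hA <;> omega)
    exact ⟨S, hS, deg_oddEdges_eq_of_card_inter_eq_two A hS hSA⟩
  · have := four_dvd_and_card_mod_two_of_hamCycle2 h
    split_ifs at hA <;> omega

/-- **Extremal example.** For every even `n ≥ 6`, with `A` of size `n/2 - 1` if `8 ∣ n`
and `n/2` otherwise, the 4-graph `H*` whose edges are the 4-sets meeting `A` in an odd
number of vertices has minimum codegree exactly `n/2 - 3` resp. `n/2 - 2`, and contains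
no Hamilton 2-cycle. -/
theorem statement2 (n : ℕ) (hn : 6 ≤ n) (hev : Even n) (A : Finset (Fin n))
    (hA : A.card = if 8 ∣ n then n / 2 - 1 else n / 2) :
    (∀ S : Finset (Fin n), S.card = 3 →
        (if 8 ∣ n then n / 2 - 3 else n / 2 - 2) ≤
          deg (oddEdges (Finset.powersetCard 4 (Finset.univ : Finset (Fin n))) A) S) ∧
    (∃ S : Finset (Fin n), S.card = 3 ∧
        deg (oddEdges (Finset.powersetCard 4 (Finset.univ : Finset (Fin n))) A) S =
          (if 8 ∣ n then n / 2 - 3 else n / 2 - 2)) ∧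
    ¬ HamCycle2 n (oddEdges (Finset.powersetCard 4 (Finset.univ : Finset (Fin n))) A) :=
  statement2_general n hn A hA
end

section
/- Suppose 1/n ≪ β ≪ μ ≪ 1 (nested-quantifier reading). Let H be a 4-graph on n vertices. Then: (i) every β-fine vertex of H is contained in at least (1−β)n β-fine pairs; (ii) every β-fine vertex of H is contained in at least (1−β)·C(n,2) β-fine triples; (iii) every β-fine pair of H is contained in at least (1−β)n β-fine triples. Moreover, if R ⊆ V(H) satisfies |R| ≤ (1−μ)n, then: (iv) for any two disjoint β-fine pairs p and p' there exists a pair p'' of vertices of V(H) ∖ R, disjoint from p ∪ p', such that p ∪ p'' ∈ E(H) and p' ∪ p'' ∈ E(H); and (v) if every vertex of H is β-fine, then for any β-fine pair p there exists a β-fine pair p'' of vertices of V(H) ∖ R, disjoint from p, such that p ∪ p'' ∈ E(H). -/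
/-!
Parts (i)–(iii) are averaging arguments. Summing the degrees of the `m`-sets that contain a
`k`-set `S` counts every edge through `S` exactly `C(4 - k, m - k)` times, and each such degree
is at most its trivial maximum `C(n - m, 4 - m)`; so if `S` has nearly full degree, only few of
its `m`-supersets can fall below the fineness threshold.

For (iv) and (v): a fine pair `p` has at most `β² C(n, 2)` pairs `q` with `p ∪ q ∉ E`, and
when every vertex is fine, (i) and double counting show that at most `β n² / 2` pairs are not
fine. These exceptional families are much smaller than the `C(μ n - 4, 2)` pairs outside
`R ∪ p ∪ p'`.
-/

open Finset

open HamiltonTwoCycles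

namespace HamiltonTwoCycles

lemma card_filter_superset_powersetCard {α : Type*} [DecidableEq α] {S s : Finset α} {m : ℕ}
    (hSs : S ⊆ s) (hSm : #S ≤ m) :
    #{Y ∈ s.powersetCard m | S ⊆ Y} = (#s - #S).choose (m - #S) := by
  rw [← card_sdiff_of_subset hSs, ← card_powersetCard]
  refine card_nbij' (· \ S) (S ∪ ·) (fun Y hY => ?_) (fun T hT => ?_) (fun Y hY => ?_)
    (fun T hT => ?_)
  · simp only [mem_coe, mem_filter, mem_powersetCard] at hY
    simp only [mem_coe, mem_powersetCard]
    exact ⟨sdiff_subset_sdiff hY.1.1 le_rfl, by rw [card_sdiff_of_subset hY.2, hY.1.2]⟩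
  · simp only [mem_coe, mem_powersetCard, subset_sdiff] at hT
    simp only [mem_coe, mem_filter, mem_powersetCard]
    refine ⟨⟨union_subset hSs hT.1.1, ?_⟩, subset_union_left⟩
    rw [card_union_of_disjoint hT.1.2.symm, hT.2]
    omega
  · simp only [mem_coe, mem_filter] at hY
    exact union_sdiff_of_subset hY.2
  · simp only [mem_coe, mem_powersetCard, subset_sdiff] at hT
    exact union_sdiff_cancel_left hT.1.2.symm

lemma sum_sub_card_mul_le_card_filter_mul {α : Type*} (U : Finset α) (f : α → ℝ) {D : ℝ}
    (hD : ∀ x ∈ U, f x ≤ D) (t : ℝ) :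
    ∑ x ∈ U, f x - #U * t ≤ #{x ∈ U | t ≤ f x} * (D - t) := by
  classical
  have hcard := card_filter_add_card_filter_not (s := U) (t ≤ f ·)
  have hgood : ∑ x ∈ U with t ≤ f x, f x ≤ #{x ∈ U | t ≤ f x} * D := by
    simpa using sum_le_card_nsmul _ f D fun x hx => hD x (mem_filter.1 hx).1
  have hbad : ∑ x ∈ U with ¬ t ≤ f x, f x ≤ #{x ∈ U | ¬ t ≤ f x} * t := by
    simpa using sum_le_card_nsmul _ f t fun x hx => (not_le.1 (mem_filter.1 hx).2).le
  rw [← sum_filter_add_sum_filter_not U (t ≤ f ·), ← hcard]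
  push_cast
  linarith

variable {n r : ℕ} {E : Finset (Finset (Fin n))}

lemma deg_le_choose (hE : ∀ e ∈ E, #e = r) {S : Finset (Fin n)} (hSr : #S ≤ r) :
    deg E S ≤ (n - #S).choose (r - #S) := by
  have h := card_filter_superset_powersetCard (subset_univ S) hSr
  rw [card_univ, Fintype.card_fin] at h
  rw [← h]
  refine card_le_card fun e he => ?_
  rw [mem_filter] at he ⊢
  exact ⟨mem_powersetCard.2 ⟨subset_univ e, hE e he.1⟩, he.2⟩

lemma sum_deg_supersets (hE : ∀ e ∈ E, #e = r) {S : Finset (Fin n)} {m : ℕ} (hSm : #S ≤ m) :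
    ∑ Y ∈ univ.powersetCard m with S ⊆ Y, deg E Y = (r - #S).choose (m - #S) * deg E S := by
  simp only [deg, card_filter]
  rw [sum_comm, mul_sum]
  refine sum_congr rfl fun e he => ?_
  rw [← card_filter]
  split_ifs with hSe
  · rw [mul_one, ← hE e he, ← card_filter_superset_powersetCard hSe hSm]
    congr 1
    ext Y
    simp only [mem_filter, mem_powersetCard, subset_univ, true_and]
    tauto
  · rw [mul_zero, card_eq_zero, filter_eq_empty_iff]
    exact fun Y hY hYe => hSe ((mem_filter.1 hY).2.trans hYe)

lemma card_filter_union_mem (hE : ∀ e ∈ E, #e = r) (S : Finset (Fin n)) :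
    #{T ∈ (univ \ S).powersetCard (r - #S) | S ∪ T ∈ E} = deg E S := by
  refine card_nbij' (S ∪ ·) (· \ S) (fun T hT => ?_) (fun e he => ?_) (fun T hT => ?_)
    (fun e he => ?_)
  · simp only [mem_coe, mem_filter] at hT
    simp only [mem_coe, mem_filter]
    exact ⟨hT.2, subset_union_left⟩
  · simp only [mem_coe, mem_filter] at he
    simp only [mem_coe, mem_filter, mem_powersetCard, union_sdiff_of_subset he.2]
    refine ⟨⟨sdiff_subset_sdiff (subset_univ e) le_rfl, ?_⟩, he.1⟩
    rw [card_sdiff_of_subset he.2, hE e he.1]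
  · simp only [mem_coe, mem_filter, mem_powersetCard, subset_sdiff] at hT
    exact union_sdiff_cancel_left hT.1.1.2.symm
  · simp only [mem_coe, mem_filter] at he
    exact union_sdiff_of_subset he.2

lemma cast_choose_three (n : ℕ) : (n.choose 3 : ℝ) = n * (n - 1) * (n - 2) / 6 := by
  rw [Nat.cast_choose_eq_descPochhammer_div]
  simp [descPochhammer_succ_right, Nat.factorial]

lemma choose_mul_deg_sub_le_card_supersets_mul (hE : ∀ e ∈ E, #e = r) {S : Finset (Fin n)}
    {m : ℕ} (hSm : #S ≤ m) (hmr : m ≤ r) (t : ℝ) :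
    ((r - #S).choose (m - #S) * deg E S : ℝ) - (n - #S).choose (m - #S) * t ≤
      #{Y ∈ (univ : Finset (Fin n)).powersetCard m | S ⊆ Y ∧ t ≤ deg E Y} *
        ((n - m).choose (r - m) - t) := by
  have hdeg : ∀ Y ∈ {Y ∈ (univ : Finset (Fin n)).powersetCard m | S ⊆ Y},
      (deg E Y : ℝ) ≤ (n - m).choose (r - m) := by
    intro Y hY
    have hY : #Y = m := (mem_powersetCard.1 (mem_filter.1 hY).1).2
    exact_mod_cast hY ▸ deg_le_choose hE (hY ▸ hmr)
  have h := sum_sub_card_mul_le_card_filter_mul _ _ hdeg t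
  have hsum := sum_deg_supersets hE hSm
  have hcard := card_filter_superset_powersetCard (subset_univ S) hSm
  rw [card_univ, Fintype.card_fin] at hcard
  rw [filter_filter, ← Nat.cast_sum, hsum, hcard] at h
  exact_mod_cast h

lemma natCard_supersets_eq_card_filter (S : Finset (Fin n)) (m : ℕ) (P : Finset (Fin n) → Prop)
    [DecidablePred P] :
    Nat.card {Y : Finset (Fin n) // S ⊆ Y ∧ #Y = m ∧ P Y} =
      #{Y ∈ univ.powersetCard m | S ⊆ Y ∧ P Y} := by
  rw [Nat.card_eq_fintype_card, Fintype.card_subtype, powersetCard_eq_filter, filter_filter]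
  congr 1
  ext Y
  simp only [mem_filter, mem_powerset, subset_univ, mem_univ, true_and]
  tauto

variable {β : ℝ}

theorem FineVertex.le_natCard_finePairs (h4 : Is4Graph E) {v : Fin n} (hv : FineVertex n E β v)
    (hβ : 0 ≤ β) (hβ1 : β ≤ 1 / 100) (hβn : 5 ≤ β ^ 2 * n) :
    (1 - β) * n ≤ Nat.card {p : Finset (Fin n) // v ∈ p ∧ FinePair n E β p} := by
  have hN : (3 : ℝ) ≤ n := by nlinarith
  have hn : 3 ≤ n := by exact_mod_cast hN
  set t := (1 - β ^ 2) * (n.choose 2 : ℝ) with ht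
  have key := choose_mul_deg_sub_le_card_supersets_mul h4 (S := {v}) (m := 2) (by simp)
    (by norm_num) t
  norm_num only [card_singleton, Nat.choose_one_right] at key
  simp only [FinePair, ← singleton_subset_iff]
  rw [natCard_supersets_eq_card_filter]
  have hC2 : (n.choose 2 : ℝ) = n * (n - 1) / 2 := Nat.cast_choose_two ℝ n
  have hD : ((n - 2).choose 2 : ℝ) = (n - 2) * (n - 3) / 2 := by
    rw [Nat.cast_choose_two, Nat.cast_sub (by omega)]
    ring
  have hv' : (1 - β ^ 3) * (n * (n - 1) * (n - 2) / 6) ≤ (deg E {v} : ℝ) :=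
    cast_choose_three n ▸ hv
  have hgap : 0 < ((n - 2).choose 2 : ℝ) - t := by
    rw [hD, ht, hC2]
    nlinarith
  refine le_of_mul_le_mul_right ?_ hgap
  have hbr : 0 ≤ n * (3 - 4 * β - β ^ 2 + 2 * β ^ 3) - 5 + 6 * β + β ^ 2 - 2 * β ^ 3 := by
    have h2 : 2 ≤ 3 - 4 * β - β ^ 2 + 2 * β ^ 3 := by nlinarith
    nlinarith
  calc (1 - β) * n * ((n - 2).choose 2 - t)
      ≤ 3 * ((1 - β ^ 3) * (n * (n - 1) * (n - 2) / 6)) - ((n - 1 : ℕ) : ℝ) * t := by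
        -- the right side exceeds the left by `n / 2` times the right side of `hbr`
        rw [hD, Nat.cast_sub (by omega), ht, hC2]
        nlinarith [mul_nonneg (by positivity : (0 : ℝ) ≤ n / 2) hbr]
    _ ≤ _ := by linarith

theorem FineVertex.le_natCard_fineTriples (h4 : Is4Graph E) {v : Fin n}
    (hv : FineVertex n E β v) (hβ : 0 ≤ β) (hβ1 : β ≤ 1 / 100) (hβn : 5 ≤ β ^ 2 * n) :
    (1 - β) * n.choose 2 ≤ Nat.card {S : Finset (Fin n) // v ∈ S ∧ FineTriple n E β S} := by
  have hN : (3 : ℝ) ≤ n := by nlinarith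
  have hn : 3 ≤ n := by exact_mod_cast hN
  set t := (1 - β) * (n : ℝ) with ht
  have key := choose_mul_deg_sub_le_card_supersets_mul h4 (S := {v}) (m := 3) (by simp)
    (by norm_num) t
  norm_num only [card_singleton, Nat.choose_one_right, show (3 : ℕ).choose 2 = 3 from rfl] at key
  simp only [FineTriple, ← singleton_subset_iff]
  rw [natCard_supersets_eq_card_filter]
  have hv' : (1 - β ^ 3) * (n * (n - 1) * (n - 2) / 6) ≤ (deg E {v} : ℝ) :=
    cast_choose_three n ▸ hv
  have hgap : 0 < ((n - 3 : ℕ) : ℝ) - t := by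
    rw [Nat.cast_sub hn, Nat.cast_ofNat, ht]
    nlinarith
  refine le_of_mul_le_mul_right ?_ hgap
  have hbr : 0 ≤ β ^ 2 * n - 2 * β - 2 * β ^ 2 + 3 := by nlinarith
  calc (1 - β) * n.choose 2 * ((n - 3 : ℕ) - t)
      ≤ 3 * ((1 - β ^ 3) * (n * (n - 1) * (n - 2) / 6)) - ((n - 1).choose 2 : ℝ) * t := by
        rw [Nat.cast_choose_two, Nat.cast_choose_two, Nat.cast_sub hn, Nat.cast_sub (by omega), ht]
        nlinarith [mul_nonneg (mul_nonneg (by nlinarith : (0 : ℝ) ≤ n * (n - 1) / 2)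
          (by linarith : 0 ≤ 1 - β)) hbr]
    _ ≤ _ := by linarith

theorem FinePair.le_natCard_fineTriples (h4 : Is4Graph E) {p : Finset (Fin n)}
    (hp : FinePair n E β p) (hβ : 0 ≤ β) (hβ1 : β ≤ 1 / 100) (hβn : 5 ≤ β ^ 2 * n) :
    (1 - β) * n ≤ Nat.card {S : Finset (Fin n) // p ⊆ S ∧ FineTriple n E β S} := by
  have hN : (3 : ℝ) ≤ n := by nlinarith
  have hn : 3 ≤ n := by exact_mod_cast hN
  obtain ⟨hp2, hdeg⟩ := hp
  set t := (1 - β) * (n : ℝ) with ht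
  have key := choose_mul_deg_sub_le_card_supersets_mul h4 (S := p) (m := 3) (by omega)
    (by norm_num) t
  norm_num only [hp2, Nat.choose_one_right] at key
  simp only [FineTriple]
  rw [natCard_supersets_eq_card_filter]
  have hgap : 0 < ((n - 3 : ℕ) : ℝ) - t := by
    rw [Nat.cast_sub hn, Nat.cast_ofNat, ht]
    nlinarith
  refine le_of_mul_le_mul_right ?_ hgap
  calc (1 - β) * n * ((n - 3 : ℕ) - t)
      ≤ 2 * ((1 - β ^ 2) * n.choose 2) - ((n - 2 : ℕ) : ℝ) * t := by
        rw [Nat.cast_choose_two, Nat.cast_sub hn, Nat.cast_sub (by omega), ht]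
        nlinarith [mul_nonneg (mul_nonneg (by positivity : (0 : ℝ) ≤ n)
          (by linarith : 0 ≤ 1 - β)) (by linarith : (0 : ℝ) ≤ 4 - β)]
    _ ≤ _ := by linarith

def nonLinkPairs (E : Finset (Finset (Fin n))) (p : Finset (Fin n)) : Finset (Finset (Fin n)) :=
  {q ∈ (univ \ p).powersetCard 2 | p ∪ q ∉ E}

noncomputable def nonFinePairs (E : Finset (Finset (Fin n))) (β : ℝ) : Finset (Finset (Fin n)) :=
  {q ∈ (univ : Finset (Fin n)).powersetCard 2 | (deg E q : ℝ) < (1 - β ^ 2) * n.choose 2}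

lemma union_mem_of_notMem_nonLinkPairs {p q : Finset (Fin n)} (hqp : Disjoint q p)
    (hq : #q = 2) (hq' : q ∉ nonLinkPairs E p) : p ∪ q ∈ E := by
  by_contra h
  exact hq' <| mem_filter.2
    ⟨mem_powersetCard.2 ⟨subset_sdiff.2 ⟨subset_univ q, hqp⟩, hq⟩, h⟩

lemma finePair_of_notMem_nonFinePairs {q : Finset (Fin n)} (hq : #q = 2)
    (hq' : q ∉ nonFinePairs E β) : FinePair n E β q := by
  simpa [nonFinePairs, FinePair, hq] using hq'

theorem FinePair.card_nonLinkPairs_le (h4 : Is4Graph E) {p : Finset (Fin n)}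
    (hp : FinePair n E β p) :
    (#(nonLinkPairs E p) : ℝ) ≤ β ^ 2 * n.choose 2 := by
  obtain ⟨hp2, hdeg⟩ := hp
  have hlink := card_filter_union_mem h4 p
  have hsplit := card_filter_add_card_filter_not (s := (univ \ p).powersetCard 2) (p ∪ · ∈ E)
  rw [hp2] at hlink
  rw [hlink, card_powersetCard, card_sdiff_of_subset (subset_univ p), card_univ,
    Fintype.card_fin, hp2] at hsplit
  have hsplit' : (deg E p : ℝ) + #(nonLinkPairs E p) = (n - 2).choose 2 := by
    exact_mod_cast hsplit
  have hle : ((n - 2).choose 2 : ℝ) ≤ n.choose 2 := by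
    exact_mod_cast Nat.choose_le_choose 2 (Nat.sub_le n 2)
  linarith

theorem card_nonFinePairs_le (h4 : Is4Graph E) (hfine : ∀ v, FineVertex n E β v)
    (hβ : 0 ≤ β) (hβ1 : β ≤ 1 / 100) (hβn : 5 ≤ β ^ 2 * n) :
    (#(nonFinePairs E β) : ℝ) ≤ β * n ^ 2 / 2 := by
  set F := {q ∈ (univ : Finset (Fin n)).powersetCard 2 |
    (1 - β ^ 2) * n.choose 2 ≤ (deg E q : ℝ)}
  have hF : (n : ℝ) * ((1 - β) * n) ≤ #F * 2 := by
    have h := card_nsmul_le_card_nsmul (s := univ) (t := F) (r := fun v q => v ∈ q)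
      (m := (1 - β) * n) (n := (2 : ℝ)) (fun v _ => ?_) (fun q hq => ?_)
    · simpa using h
    · have hv := (hfine v).le_natCard_finePairs h4 hβ hβ1 hβn
      simp only [FinePair, ← singleton_subset_iff] at hv
      rw [natCard_supersets_eq_card_filter] at hv
      have hF : bipartiteAbove (fun v q => v ∈ q) F v =
          {Y ∈ (univ : Finset (Fin n)).powersetCard 2 |
            {v} ⊆ Y ∧ (1 - β ^ 2) * n.choose 2 ≤ (deg E Y : ℝ)} := by
        rw [bipartiteAbove, filter_filter]
        simp only [singleton_subset_iff, and_comm]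
      rwa [hF]
    · rw [bipartiteBelow, filter_univ_mem]
      exact_mod_cast (mem_powersetCard.1 (mem_filter.1 hq).1).2.le
  have hsplit := card_filter_add_card_filter_not (s := (univ : Finset (Fin n)).powersetCard 2)
    (fun q => (1 - β ^ 2) * n.choose 2 ≤ (deg E q : ℝ))
  simp only [not_le, card_powersetCard, card_univ, Fintype.card_fin] at hsplit
  have hsplit' : (#F : ℝ) + #(nonFinePairs E β) = n.choose 2 := by
    exact_mod_cast hsplit
  have hC : (n.choose 2 : ℝ) = n * (n - 1) / 2 := Nat.cast_choose_two ℝ n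
  nlinarith

lemma exists_pair_disjoint_notMem {μ : ℝ} {R X : Finset (Fin n)}
    (hR : (#R : ℝ) ≤ (1 - μ) * n) (hX : #X ≤ 4) (hμn : 20 ≤ μ * n)
    {B : Finset (Finset (Fin n))} (hB : (#B : ℝ) ≤ (μ * n) ^ 2 / 100) :
    ∃ q : Finset (Fin n), #q = 2 ∧ Disjoint q R ∧ Disjoint q X ∧ q ∉ B := by
  have hw : μ * n - 4 ≤ (#(univ \ (R ∪ X)) : ℝ) := by
    have h1 := card_sdiff_add_card_eq_card (subset_univ (R ∪ X))
    have h2 := card_union_le R X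
    rw [card_univ, Fintype.card_fin] at h1
    have h3 : (n : ℝ) ≤ #(univ \ (R ∪ X)) + #R + #X := by exact_mod_cast (by omega)
    have h4 : (#X : ℝ) ≤ 4 := by exact_mod_cast hX
    linarith
  obtain ⟨q, hq, hqB⟩ := exists_mem_notMem_of_card_lt_card (s := B)
    (t := (univ \ (R ∪ X)).powersetCard 2) (by
      rw [card_powersetCard, ← Nat.cast_lt (α := ℝ), Nat.cast_choose_two]
      nlinarith)
  simp only [mem_powersetCard, subset_sdiff, disjoint_union_right, subset_univ, true_and] at hq
  exact ⟨q, hq.2, hq.1.1, hq.1.2, hqB⟩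

theorem FinePair.exists_common_extension (h4 : Is4Graph E) {p p' : Finset (Fin n)}
    (hp : FinePair n E β p) (hp' : FinePair n E β p') {μ : ℝ} {R : Finset (Fin n)}
    (hR : (#R : ℝ) ≤ (1 - μ) * n) (hβ : 0 ≤ β) (hβμ : 10 * β ≤ μ)
    (hμn : 20 ≤ μ * n) :
    ∃ p'' : Finset (Fin n), #p'' = 2 ∧ Disjoint p'' R ∧ Disjoint p'' (p ∪ p') ∧
      p ∪ p'' ∈ E ∧ p' ∪ p'' ∈ E := by
  have hX : #(p ∪ p') ≤ 4 := (card_union_le p p').trans (by rw [hp.1, hp'.1])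
  have hB : (#(nonLinkPairs E p ∪ nonLinkPairs E p') : ℝ) ≤ (μ * n) ^ 2 / 100 := by
    have hunion : (#(nonLinkPairs E p ∪ nonLinkPairs E p') : ℝ) ≤
        #(nonLinkPairs E p) + #(nonLinkPairs E p') := by
      exact_mod_cast card_union_le _ _
    have hC : (n.choose 2 : ℝ) ≤ n ^ 2 / 2 := by
      rw [Nat.cast_choose_two]; nlinarith
    have hsq : (10 * β * n) ^ 2 ≤ (μ * n) ^ 2 :=
      pow_le_pow_left₀ (by positivity) (mul_le_mul_of_nonneg_right hβμ n.cast_nonneg) 2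
    nlinarith [hp.card_nonLinkPairs_le h4, hp'.card_nonLinkPairs_le h4,
      mul_le_mul_of_nonneg_left hC (sq_nonneg β)]
  obtain ⟨q, hq2, hqR, hqX, hqB⟩ := exists_pair_disjoint_notMem hR hX hμn hB
  rw [mem_union, not_or] at hqB
  rw [disjoint_union_right] at hqX
  exact ⟨q, hq2, hqR, disjoint_union_right.2 hqX,
    union_mem_of_notMem_nonLinkPairs hqX.1 hq2 hqB.1,
    union_mem_of_notMem_nonLinkPairs hqX.2 hq2 hqB.2⟩

theorem FinePair.exists_fine_extension (h4 : Is4Graph E) (hfine : ∀ v, FineVertex n E β v)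
    {p : Finset (Fin n)} (hp : FinePair n E β p) {μ : ℝ} {R : Finset (Fin n)}
    (hR : (#R : ℝ) ≤ (1 - μ) * n) (hβ : 0 ≤ β) (hβ1 : β ≤ 1 / 100)
    (hβn : 5 ≤ β ^ 2 * n) (hβμ : 100 * β ≤ μ ^ 2) (hμn : 20 ≤ μ * n) :
    ∃ p'' : Finset (Fin n), FinePair n E β p'' ∧ Disjoint p'' R ∧ Disjoint p'' p ∧
      p ∪ p'' ∈ E := by
  have hB : (#(nonLinkPairs E p ∪ nonFinePairs E β) : ℝ) ≤ (μ * n) ^ 2 / 100 := by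
    have hunion : (#(nonLinkPairs E p ∪ nonFinePairs E β) : ℝ) ≤
        #(nonLinkPairs E p) + #(nonFinePairs E β) := by
      exact_mod_cast card_union_le _ _
    have hC : (n.choose 2 : ℝ) ≤ n ^ 2 / 2 := by
      rw [Nat.cast_choose_two]; nlinarith
    nlinarith [hp.card_nonLinkPairs_le h4, card_nonFinePairs_le h4 hfine hβ hβ1 hβn,
      mul_le_mul_of_nonneg_left hC (sq_nonneg β), sq_nonneg (n : ℝ)]
  obtain ⟨q, hq2, hqR, hqp, hqB⟩ :=
    exists_pair_disjoint_notMem hR (by rw [hp.1]; norm_num) hμn hB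
  rw [mem_union, not_or] at hqB
  exact ⟨q, finePair_of_notMem_nonFinePairs hq2 hqB.2, hqR, hqp,
    union_mem_of_notMem_nonLinkPairs hqp hq2 hqB.1⟩

end HamiltonTwoCycles

/-- **Proposition 5.3.** Properties of `β`-fine vertices, pairs and triples in a
4-graph `H` on `n` vertices, where `1/n ≪ β ≪ μ ≪ 1`. -/
theorem statement12 :
    ∃ μ₀ : ℝ, 0 < μ₀ ∧ ∀ μ : ℝ, 0 < μ → μ ≤ μ₀ →
    ∃ β₀ : ℝ, 0 < β₀ ∧ ∀ β : ℝ, 0 < β → β ≤ β₀ →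
    ∃ n₀ : ℕ, ∀ n : ℕ, n₀ ≤ n →
    ∀ E : Finset (Finset (Fin n)), Is4Graph E →
      ((∀ v : Fin n, FineVertex n E β v →
          (1 - β) * (n : ℝ) ≤
            (Nat.card {p : Finset (Fin n) // v ∈ p ∧ FinePair n E β p} : ℝ)) ∧
       (∀ v : Fin n, FineVertex n E β v →
          (1 - β) * (n.choose 2 : ℝ) ≤
            (Nat.card {S : Finset (Fin n) // v ∈ S ∧ FineTriple n E β S} : ℝ)) ∧
       (∀ p : Finset (Fin n), FinePair n E β p →
          (1 - β) * (n : ℝ) ≤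
            (Nat.card {S : Finset (Fin n) // p ⊆ S ∧ FineTriple n E β S} : ℝ)) ∧
       (∀ R : Finset (Fin n), (R.card : ℝ) ≤ (1 - μ) * n →
         ((∀ p p' : Finset (Fin n), FinePair n E β p → FinePair n E β p' →
            Disjoint p p' →
            ∃ p'' : Finset (Fin n), p''.card = 2 ∧ Disjoint p'' R ∧
              Disjoint p'' (p ∪ p') ∧ p ∪ p'' ∈ E ∧ p' ∪ p'' ∈ E) ∧
          ((∀ v : Fin n, FineVertex n E β v) →
            ∀ p : Finset (Fin n), FinePair n E β p →
              ∃ p'' : Finset (Fin n), FinePair n E β p'' ∧ Disjoint p'' R ∧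
                Disjoint p'' p ∧ p ∪ p'' ∈ E)))) := by
  refine ⟨1, one_pos, fun μ hμ hμ1 => ⟨μ ^ 2 / 100, by positivity, fun β hβ hβμ =>
    ⟨⌈5 / β ^ 2⌉₊, fun n hn E h4 => ?_⟩⟩⟩
  have hβ1 : β ≤ 1 / 100 := hβμ.trans (by nlinarith)
  have hβμ' : 100 * β ≤ μ := by nlinarith
  have hβn : 5 ≤ β ^ 2 * n := by
    have h := Nat.ceil_le.1 hn
    rwa [div_le_iff₀ (by positivity), mul_comm] at h
  have hμn : 20 ≤ μ * n := by nlinarith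
  refine ⟨fun v hv => hv.le_natCard_finePairs h4 hβ.le hβ1 hβn,
    fun v hv => hv.le_natCard_fineTriples h4 hβ.le hβ1 hβn,
    fun p hp => hp.le_natCard_fineTriples h4 hβ.le hβ1 hβn, fun R hR => ⟨?_, ?_⟩⟩
  · exact fun p p' hp hp' _ => hp.exists_common_extension h4 hp' hR hβ.le (by linarith) hμn
  · exact fun hfine p hp => hp.exists_fine_extension h4 hfine hR hβ.le hβ1 hβn (by linarith) hμn
end
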